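/- arXiv:1201.0496 — 3 statements merged into one kernel-verified Lean document; each statement's English description precedes it below -/
import Mathlib

section
/- Let w₀ ∈ Sₙ be the longest element, w₀(k) = n+1−k, and let (i₁,…,i_ℓ) be any reduced word for w₀. Then σ(i₁,…,i_ℓ)² = (−1)^{n−1}·I, which is a central element of GL(n,ℂ). -/
open Matrix

noncomputable section

/-- The element `i` of `{1,…,n−1}` viewed in `Fin n` (0-indexed: position `i`). -/
def finA {n : ℕ} (i : Fin (n - 1)) : Fin n := ⟨i.val, by have := i.isLt; omega⟩

/-- The element `i+1` of `{1,…,n}` viewed in `Fin n` (0-indexed: position `i+1`). -/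
def finB {n : ℕ} (i : Fin (n - 1)) : Fin n := ⟨i.val + 1, by have := i.isLt; omega⟩

/-- The Tits representative `σ_i ∈ GL(n,ℂ)` of the simple reflection `s_i = (i,i+1)`:
it agrees with the identity matrix except in rows and columns `i, i+1`, where its entries
are `(σ_i)_{i,i} = (σ_i)_{i+1,i+1} = 0`, `(σ_i)_{i,i+1} = 1`, `(σ_i)_{i+1,i} = −1`. -/
def sigmaMat (n : ℕ) (i : Fin (n - 1)) : Matrix (Fin n) (Fin n) ℂ :=
  1 - single (finA i) (finA i) 1 - single (finB i) (finB i) 1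
    + single (finA i) (finB i) 1 - single (finB i) (finA i) 1

/-- The simple reflection `s_i = (i,i+1)` in the symmetric group `Sₙ`. -/
def simpleRefl {n : ℕ} (i : Fin (n - 1)) : Equiv.Perm (Fin n) := Equiv.swap (finA i) (finB i)

/-- The permutation `s_{i₁} ∘ ⋯ ∘ s_{i_ℓ}` attached to the word `(i₁,…,i_ℓ)`. -/
def wordPerm {n : ℕ} (l : List (Fin (n - 1))) : Equiv.Perm (Fin n) :=
  (l.map simpleRefl).prod

/-- The matrix `σ(i₁,…,i_ℓ) = σ_{i₁} ⋯ σ_{i_ℓ}` attached to the word `(i₁,…,i_ℓ)`. -/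
def wordMat (n : ℕ) (l : List (Fin (n - 1))) : Matrix (Fin n) (Fin n) ℂ :=
  (l.map (sigmaMat n)).prod

/-- The Coxeter length of `w ∈ Sₙ`: the number of inversions. -/
def invCount {n : ℕ} (w : Equiv.Perm (Fin n)) : ℕ :=
  (Finset.univ.filter fun p : Fin n × Fin n => p.1 < p.2 ∧ w p.2 < w p.1).card

/-- `(i₁,…,i_ℓ)` is a reduced word for `w`: the product of the corresponding simple
reflections is `w` and the length of the word equals the number of inversions of `w`. -/
def IsReducedWord {n : ℕ} (l : List (Fin (n - 1))) (w : Equiv.Perm (Fin n)) : Prop :=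
  wordPerm l = w ∧ l.length = invCount w

/-- The diagonal matrix `d` with entries `d_{kk} = (−1)^{k−1}` (1-indexed), used in the
pinned Chevalley involution `C_P(g) = d (gᵀ)⁻¹ d⁻¹` of `GL(n,ℂ)`. -/
def dMat (n : ℕ) : Matrix (Fin n) (Fin n) ℂ := Matrix.diagonal fun k => (-1 : ℂ) ^ (k : ℕ)

end

/-!
Let `σ_w` be the signed permutation matrix sending `e_k` to `(-1)^{m_w(k)} e_{w k}`, where
`m_w(k)` counts the inversions `(k, j)` of `w` with left end `k`. If `w s_i` is longer than `w`,
the only new inversion of `w s_i` is `(i, i+1)`, so `σ_w σ_i = σ_{w s_i}`; by induction every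
reduced word of `w` gives `σ_w`. Every pair is an inversion of `w₀`, so `m_{w₀}(k) = n - 1 - k`
and `σ_{w₀}²` is diagonal with entries `(-1)^{m_{w₀}(w₀ k) + m_{w₀}(k)} = (-1)^{n-1}`.
-/

namespace Matrix

variable {ι R : Type*} [DecidableEq ι]

def signedPermMatrix [Zero R] (w : Equiv.Perm ι) (ε : ι → R) : Matrix ι ι R :=
  of fun j k => if w k = j then ε k else 0

theorem signedPermMatrix_mul_signedPermMatrix [Fintype ι] [NonUnitalNonAssocSemiring R]
    (w v : Equiv.Perm ι) (ε δ : ι → R) :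
    signedPermMatrix w ε * signedPermMatrix v δ =
      signedPermMatrix (w * v) fun k => ε (v k) * δ k := by
  ext j k
  simp [signedPermMatrix, mul_apply, ite_mul, mul_ite]
  rfl

theorem signedPermMatrix_one_const [Semiring R] (c : R) :
    signedPermMatrix (1 : Equiv.Perm ι) (fun _ => c) = c • 1 := by
  ext j k
  simp [signedPermMatrix, one_apply, eq_comm]

end Matrix

open Matrix Finset

variable {n : ℕ}

theorem finB_val (i : Fin (n - 1)) : (finB i : ℕ) = finA i + 1 := rfl

theorem finA_lt_finB (i : Fin (n - 1)) : finA i < finB i :=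
  Fin.lt_def.2 (Nat.lt_succ_self _)

theorem lt_or_gt_apply_finA_finB (i : Fin (n - 1)) (w : Equiv.Perm (Fin n)) :
    w (finA i) < w (finB i) ∨ w (finB i) < w (finA i) :=
  (w.injective.ne (finA_lt_finB i).ne).lt_or_gt

theorem sigmaMat_eq_signedPermMatrix (i : Fin (n - 1)) :
    sigmaMat n i = signedPermMatrix (simpleRefl i) fun k => if k = finA i then -1 else 1 := by
  have hab := (finA_lt_finB i).ne
  ext j k
  rcases eq_or_ne k (finA i) with rfl | hka
  · by_cases hj : j = finB i <;>
      simp [sigmaMat, signedPermMatrix, simpleRefl, single_apply, one_apply, hab, hab.symm, hj,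
        eq_comm]
  rcases eq_or_ne k (finB i) with rfl | hkb
  · by_cases hj : j = finA i <;>
      simp [sigmaMat, signedPermMatrix, simpleRefl, single_apply, one_apply, hab, hab.symm, hj,
        eq_comm]
  · simp [sigmaMat, signedPermMatrix, simpleRefl, Equiv.swap_apply_of_ne_of_ne hka hkb, one_apply,
      hka, hka.symm, hkb.symm, eq_comm]

def invCountAt (w : Equiv.Perm (Fin n)) (k : Fin n) : ℕ :=
  #{j | k < j ∧ w j < w k}

theorem invCount_eq_sum_invCountAt (w : Equiv.Perm (Fin n)) :
    invCount w = ∑ k, invCountAt w k := by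
  simp only [invCount, invCountAt, card_filter, Fintype.sum_prod_type]

theorem invCountAt_one (k : Fin n) : invCountAt 1 k = 0 := by
  rw [invCountAt, card_eq_zero, filter_eq_empty_iff]
  exact fun j _ h => lt_asymm h.1 h.2

theorem invCountAt_revPerm (k : Fin n) : invCountAt Fin.revPerm k = n - 1 - k := by
  simp [invCountAt, Fin.rev_lt_rev, filter_lt_eq_Ioi]

theorem invCountAt_mul_simpleRefl {i : Fin (n - 1)} {w : Equiv.Perm (Fin n)}
    (h : w (finA i) < w (finB i)) (k : Fin n) :
    invCountAt (w * simpleRefl i) k =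
      invCountAt w (simpleRefl i k) + if k = finA i then 1 else 0 := by
  have hb := finB_val i
  have hδ : (if k = finA i then 1 else 0 : ℕ) =
      ∑ j, if k = finA i ∧ j = finA i then 1 else 0 := by
    simp [ite_and]
  simp only [invCountAt, card_filter]
  rw [← Equiv.sum_comp (simpleRefl i), hδ, ← sum_add_distrib]
  refine sum_congr rfl fun j _ => ?_
  simp only [Equiv.Perm.mul_apply, simpleRefl, Equiv.swap_apply_self]
  -- reindexed by `j ↦ s_i j`, the inversions of `w s_i` at `k` are those of `w` at `s_i k`,
  -- plus the new inversion `(finA i, finB i)`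
  simp only [Equiv.swap_apply_def]
  split_ifs <;> subst_vars <;> simp_all <;> omega

theorem invCount_mul_simpleRefl {i : Fin (n - 1)} {w : Equiv.Perm (Fin n)}
    (h : w (finA i) < w (finB i)) : invCount (w * simpleRefl i) = invCount w + 1 := by
  simp only [invCount_eq_sum_invCountAt, invCountAt_mul_simpleRefl h, sum_add_distrib,
    Equiv.sum_comp, sum_ite_eq', mem_univ, if_true]

theorem invCount_mul_simpleRefl_of_gt {i : Fin (n - 1)} {w : Equiv.Perm (Fin n)}
    (h : w (finB i) < w (finA i)) : invCount (w * simpleRefl i) + 1 = invCount w := by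
  have h' : (w * simpleRefl i) (finA i) < (w * simpleRefl i) (finB i) := by
    simpa [simpleRefl] using h
  simpa [simpleRefl, mul_assoc] using (invCount_mul_simpleRefl h').symm

theorem invCount_mul_simpleRefl_le (i : Fin (n - 1)) (w : Equiv.Perm (Fin n)) :
    invCount (w * simpleRefl i) ≤ invCount w + 1 := by
  rcases lt_or_gt_apply_finA_finB i w with h | h
  · exact (invCount_mul_simpleRefl h).le
  · have := invCount_mul_simpleRefl_of_gt h
    omega

theorem wordPerm_concat (l : List (Fin (n - 1))) (i : Fin (n - 1)) :
    wordPerm (l ++ [i]) = wordPerm l * simpleRefl i := by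
  simp [wordPerm]

theorem wordMat_concat (l : List (Fin (n - 1))) (i : Fin (n - 1)) :
    wordMat n (l ++ [i]) = wordMat n l * sigmaMat n i := by
  simp [wordMat]

theorem invCount_wordPerm_le (l : List (Fin (n - 1))) : invCount (wordPerm l) ≤ l.length := by
  induction l using List.reverseRecOn with
  | nil => simp [wordPerm, invCountAt_one, invCount_eq_sum_invCountAt]
  | append_singleton l i ih =>
    rw [wordPerm_concat, List.length_append, List.length_singleton]
    exact (invCount_mul_simpleRefl_le i _).trans (Nat.add_le_add_right ih 1)

def titsLift (w : Equiv.Perm (Fin n)) : Matrix (Fin n) (Fin n) ℂ :=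
  signedPermMatrix w fun k => (-1) ^ invCountAt w k

theorem titsLift_one : titsLift (1 : Equiv.Perm (Fin n)) = 1 := by
  simp [titsLift, invCountAt_one, signedPermMatrix_one_const]

theorem titsLift_mul_sigmaMat {i : Fin (n - 1)} {w : Equiv.Perm (Fin n)}
    (h : w (finA i) < w (finB i)) : titsLift w * sigmaMat n i = titsLift (w * simpleRefl i) := by
  rw [sigmaMat_eq_signedPermMatrix, titsLift, signedPermMatrix_mul_signedPermMatrix, titsLift]
  congr 1
  funext k
  rw [invCountAt_mul_simpleRefl h]
  split_ifs <;> simp [pow_succ]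

theorem wordMat_eq_titsLift (l : List (Fin (n - 1))) (hl : l.length = invCount (wordPerm l)) :
    wordMat n l = titsLift (wordPerm l) := by
  induction l using List.reverseRecOn with
  | nil => simp [wordMat, wordPerm, titsLift_one]
  | append_singleton l i ih =>
    rw [wordPerm_concat, List.length_append, List.length_singleton] at hl
    have hle := invCount_wordPerm_le l
    rcases lt_or_gt_apply_finA_finB i (wordPerm l) with h | h
    · rw [invCount_mul_simpleRefl h] at hl
      rw [wordMat_concat, wordPerm_concat, ih (by omega), titsLift_mul_sigmaMat h]
    · have := invCount_mul_simpleRefl_of_gt h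
      omega

theorem titsLift_revPerm_mul_self :
    titsLift Fin.revPerm * titsLift Fin.revPerm =
      (-1 : ℂ) ^ (n - 1) • (1 : Matrix (Fin n) (Fin n) ℂ) := by
  have hinv : (Fin.revPerm : Equiv.Perm (Fin n)) * Fin.revPerm = 1 := Equiv.ext Fin.rev_rev
  rw [titsLift, signedPermMatrix_mul_signedPermMatrix, hinv, ← signedPermMatrix_one_const]
  congr 1
  funext k
  rw [← pow_add, invCountAt_revPerm, invCountAt_revPerm, Fin.revPerm_apply, Fin.val_rev]
  congr 1
  omega

theorem tits_longest_element_square_general (n : ℕ) (l : List (Fin (n - 1)))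
    (hl : IsReducedWord l (Fin.revPerm : Equiv.Perm (Fin n))) :
    wordMat n l * wordMat n l = ((-1 : ℂ) ^ (n - 1)) • (1 : Matrix (Fin n) (Fin n) ℂ) ∧
    ∀ g : GL (Fin n) ℂ,
      ((-1 : ℂ) ^ (n - 1)) • (1 : Matrix (Fin n) (Fin n) ℂ) * (g : Matrix (Fin n) (Fin n) ℂ)
        = (g : Matrix (Fin n) (Fin n) ℂ) *
            (((-1 : ℂ) ^ (n - 1)) • (1 : Matrix (Fin n) (Fin n) ℂ)) := by
  obtain ⟨hperm, hlen⟩ := hl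
  refine ⟨?_, fun g => by rw [smul_mul_assoc, one_mul, mul_smul_comm, mul_one]⟩
  rw [wordMat_eq_titsLift l (hperm ▸ hlen), hperm]
  exact titsLift_revPerm_mul_self

/-- If `(i₁,…,i_ℓ)` is a reduced word for the longest element
`w₀ : k ↦ n+1−k` of `Sₙ`, then `σ(i₁,…,i_ℓ)² = (−1)^{n−1}·I`, a central element of
`GL(n,ℂ)`. -/
theorem tits_longest_element_square (n : ℕ) (hn : 1 ≤ n) (l : List (Fin (n - 1)))
    (hl : IsReducedWord l (Fin.revPerm : Equiv.Perm (Fin n))) :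
    wordMat n l * wordMat n l = ((-1 : ℂ) ^ (n - 1)) • (1 : Matrix (Fin n) (Fin n) ℂ) ∧
    ∀ g : GL (Fin n) ℂ,
      ((-1 : ℂ) ^ (n - 1)) • (1 : Matrix (Fin n) (Fin n) ℂ) * (g : Matrix (Fin n) (Fin n) ℂ)
        = (g : Matrix (Fin n) (Fin n) ℂ) *
            (((-1 : ℂ) ^ (n - 1)) • (1 : Matrix (Fin n) (Fin n) ℂ)) :=
  tits_longest_element_square_general n l hl
end

section
/- Suppose w ∈ Sₙ satisfies w² = 1, and g ∈ GL(n,ℂ) is a monomial matrix representing w, i.e. for each k the vector g·e_k is a nonzero scalar multiple of e_{w(k)}. Then there exists an invertible diagonal matrix t such that t·C_P(g)·t⁻¹ = g⁻¹. -/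
/-! Scaling the columns of `g` by `e = diag(c⁻¹)` turns it into the permutation matrix of `w`,
which is symmetric because `w` is an involution. Hence `e gᵀ e⁻¹ = g`, so `e (gᵀ)⁻¹ e⁻¹ = g⁻¹`,
and since `d² = 1` the conjugator `t = e d` also absorbs the factor `d` of `C_P`. -/

open Matrix

section
variable {ι : Type*} [DecidableEq ι]

theorem Matrix.isSymm_permMatrix_of_mul_self_eq_one {R : Type*} [Zero R] [One R]
    {σ : Equiv.Perm ι} (hσ : σ * σ = 1) : (σ.permMatrix R).IsSymm := by
  rw [IsSymm, transpose_permMatrix, ← eq_inv_of_mul_eq_one_left hσ]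

variable [Fintype ι]

theorem Matrix.eq_permMatrix_mul_diagonal_of_mulVec_single {R : Type*} [Semiring R]
    {M : Matrix ι ι R} {w : Equiv.Perm ι} {c : ι → R}
    (hM : ∀ k, M *ᵥ Pi.single k 1 = c k • Pi.single (w k) 1) :
    M = w⁻¹.permMatrix R * diagonal c := by
  ext j k
  have hjk := congrFun (hM k) j
  rw [mulVec_single_one, col_apply] at hjk
  simp [hjk, Pi.single_apply, Equiv.symm_apply_eq, eq_comm (a := j)]

theorem Matrix.diagonal_inv_mul_diagonal {K : Type*} [Field K] {c : ι → K} (hc : ∀ k, c k ≠ 0) :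
    diagonal c⁻¹ * diagonal c = 1 := by
  rw [diagonal_mul_diagonal, ← diagonal_one]
  exact congrArg diagonal (funext fun k => inv_mul_cancel₀ (hc k))

theorem Matrix.diagonal_inv_mul_transpose_mul_diagonal {K : Type*} [Field K]
    {P : Matrix ι ι K} (hP : P.IsSymm) {c : ι → K} (hc : ∀ k, c k ≠ 0) :
    diagonal c⁻¹ * (P * diagonal c)ᵀ * diagonal c = P * diagonal c := by
  rw [transpose_mul, diagonal_transpose, hP.eq, ← mul_assoc, diagonal_inv_mul_diagonal hc,
    one_mul]

theorem Matrix.mul_inv_mul_eq_inv_of_mul_mul_eq {α : Type*} [CommRing α]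
    {P Q A B : Matrix ι ι α} (hPQ : P * Q = 1) (h : P * A * Q = B) :
    P * A⁻¹ * Q = B⁻¹ := by
  rw [← h, Matrix.mul_inv_rev, Matrix.mul_inv_rev, inv_eq_right_inv hPQ,
    inv_eq_left_inv hPQ, mul_assoc]

end

theorem dMat_mul_self (n : ℕ) : dMat n * dMat n = 1 := by
  rw [dMat, diagonal_mul_diagonal, ← diagonal_one]
  exact congrArg diagonal (funext fun k => by rw [← mul_pow, neg_one_mul, neg_neg, one_pow])

theorem chevalley_of_monomial_involution_general (n : ℕ) (w : Equiv.Perm (Fin n))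
    (hw : w * w = 1) (g : GL (Fin n) ℂ)
    (hg : ∀ k : Fin n, ∃ c : ℂ, c ≠ 0 ∧
      (g : Matrix (Fin n) (Fin n) ℂ) *ᵥ (Pi.single k 1 : Fin n → ℂ) =
        c • (Pi.single (w k) 1 : Fin n → ℂ)) :
    ∃ t : Matrix (Fin n) (Fin n) ℂ, t.IsDiag ∧ IsUnit t ∧
      t * (dMat n * (((g : Matrix (Fin n) (Fin n) ℂ))ᵀ)⁻¹ * (dMat n)⁻¹) * t⁻¹ =
        ((g⁻¹ : GL (Fin n) ℂ) : Matrix (Fin n) (Fin n) ℂ) := by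
  choose c hc hcol using hg
  set G : Matrix (Fin n) (Fin n) ℂ := ↑g
  have hG : G = w.permMatrix ℂ * diagonal c := by
    rw [eq_permMatrix_mul_diagonal_of_mulVec_single hcol, ← eq_inv_of_mul_eq_one_left hw]
  have hconj : diagonal c⁻¹ * Gᵀ * diagonal c = G := by
    rw [hG]
    exact diagonal_inv_mul_transpose_mul_diagonal (isSymm_permMatrix_of_mul_self_eq_one hw) hc
  have hcc := diagonal_inv_mul_diagonal hc
  have hd := dMat_mul_self n
  have hdd (A : Matrix (Fin n) (Fin n) ℂ) : dMat n * (dMat n * A) = A := by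
    rw [← mul_assoc, hd, one_mul]
  have ht : diagonal c⁻¹ * dMat n * (dMat n * diagonal c) = 1 := by
    rw [mul_assoc, hdd, hcc]
  refine ⟨diagonal c⁻¹ * dMat n, ?_,
    (isUnit_iff_isUnit_det _).2 (isUnit_det_of_right_inverse ht), ?_⟩
  · rw [dMat, diagonal_mul_diagonal]
    exact isDiag_diagonal _
  · rw [inv_eq_right_inv ht, inv_eq_right_inv hd, coe_units_inv,
      ← mul_inv_mul_eq_inv_of_mul_mul_eq hcc hconj]
    simp only [mul_assoc, hdd]

/-- If `w ∈ Sₙ` is an involution and `g ∈ GL(n,ℂ)` is a monomial matrix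
representing `w` (each `g·e_k` is a nonzero multiple of `e_{w(k)}`), then `C_P(g)`
is conjugate to `g⁻¹` by an invertible diagonal matrix, where
`C_P(g) = d·(gᵀ)⁻¹·d⁻¹` with `d = diag((−1)^{k−1})`. -/
theorem chevalley_of_monomial_involution (n : ℕ) (hn : 1 ≤ n) (w : Equiv.Perm (Fin n))
    (hw : w * w = 1) (g : GL (Fin n) ℂ)
    (hg : ∀ k : Fin n, ∃ c : ℂ, c ≠ 0 ∧
      (g : Matrix (Fin n) (Fin n) ℂ) *ᵥ (Pi.single k 1 : Fin n → ℂ) =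
        c • (Pi.single (w k) 1 : Fin n → ℂ)) :
    ∃ t : Matrix (Fin n) (Fin n) ℂ, t.IsDiag ∧ IsUnit t ∧
      t * (dMat n * (((g : Matrix (Fin n) (Fin n) ℂ))ᵀ)⁻¹ * (dMat n)⁻¹) * t⁻¹ =
        ((g⁻¹ : GL (Fin n) ℂ) : Matrix (Fin n) (Fin n) ℂ) :=
  chevalley_of_monomial_involution_general n w hw g hg
end

section
/- A group homomorphism φ : W_ℝ → GL(n,ℂ) admits a nondegenerate invariant Hermitian form if and only if φ is equivalent to its Hermitian dual φ^h. That is: there exists an invertible n×n complex matrix M with Mᴴ = M and φ(w)ᴴ·M·φ(w) = M for all w ∈ W_ℝ, if and only if there exists P ∈ GL(n,ℂ) with P·φ(w)·P⁻¹ = (φ(w)ᴴ)⁻¹ for all w ∈ W_ℝ. -/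
/-!
For invertible `P`, the identity `P φ(w) P⁻¹ = (φ(w)ᴴ)⁻¹` is a rearrangement of
`φ(w)ᴴ P φ(w) = P`, so `φ ≃ φ^h` says exactly that some invertible, not necessarily Hermitian,
matrix is an invariant form. The invariant forms make up a complex subspace closed under `ᴴ`,
so with `P` it contains the Hermitian matrices `P + Pᴴ` and `i(P - Pᴴ)` and all their real
combinations `(P + Pᴴ) + t • i(P - Pᴴ)`. The determinant of this combination is a polynomial
in `t` that does not vanish at `t = -i`, where the matrix is `2P`; hence it is nonzero at some
real `t`, giving an invertible invariant Hermitian form.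
-/

open Quaternion
open scoped Quaternion

noncomputable section

/-- The quaternion `j`. -/
def jq : ℍ[ℝ] := ⟨0, 0, 1, 0⟩

lemma jq_mul_jq : jq * jq = -1 := by
  ext <;> simp only [Quaternion.re_mul, Quaternion.imI_mul, Quaternion.imJ_mul, Quaternion.imK_mul] <;> simp [jq]

lemma jq_ne_zero : jq ≠ 0 := by
  intro h
  have := congrArg QuaternionAlgebra.imJ h
  simp [jq] at this

lemma coeComplex_ne_zero {z : ℂ} (hz : z ≠ 0) : (z : ℍ[ℝ]) ≠ 0 := by
  intro h
  apply hz
  have hre := congrArg QuaternionAlgebra.re h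
  have him := congrArg QuaternionAlgebra.imI h
  simp at hre him
  exact Complex.ext hre him

lemma coeComplex_neg (z : ℂ) : ((-z : ℂ) : ℍ[ℝ]) = -(z : ℍ[ℝ]) := by
  ext <;> simp

lemma coeComplex_inv (z : ℂ) : ((z⁻¹ : ℂ) : ℍ[ℝ]) = ((z : ℍ[ℝ]))⁻¹ := by
  have h := map_inv₀ Quaternion.ofComplex z
  rwa [Quaternion.coe_ofComplex] at h

lemma jq_mul_coeComplex (z : ℂ) : jq * (z : ℍ[ℝ]) = ((starRingEnd ℂ) z : ℂ) * jq := by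
  ext <;> simp only [Quaternion.re_mul, Quaternion.imI_mul, Quaternion.imJ_mul, Quaternion.imK_mul] <;> simp [jq]

/-- The real Weil group `W_ℝ`, realized inside the unit group of the Hamilton quaternions:
the subgroup of `ℍˣ` consisting of all (nonzero) elements of the form `z` or `z·j` with
`z ∈ ℂˣ`. -/
def WeilR : Subgroup (ℍ[ℝ])ˣ where
  carrier := {w | ∃ z : ℂ, z ≠ 0 ∧
    ((w : ℍ[ℝ]) = (z : ℍ[ℝ]) ∨ (w : ℍ[ℝ]) = (z : ℍ[ℝ]) * jq)}
  one_mem' := ⟨1, one_ne_zero, Or.inl (by simp)⟩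
  mul_mem' := by
    rintro a b ⟨z, hz, hza | hza⟩ ⟨w, hw, hwb | hwb⟩
    · exact ⟨z * w, mul_ne_zero hz hw, Or.inl (by push_cast [Units.val_mul, hza, hwb]; ring)⟩
    · exact ⟨z * w, mul_ne_zero hz hw, Or.inr (by
        push_cast [Units.val_mul, hza, hwb]; rw [mul_assoc])⟩
    · exact ⟨z * (starRingEnd ℂ) w, mul_ne_zero hz (by simpa using hw), Or.inr (by
        push_cast [Units.val_mul, hza, hwb]
        rw [mul_assoc, jq_mul_coeComplex w]
        rw [mul_assoc])⟩
    · exact ⟨-(z * (starRingEnd ℂ) w), neg_ne_zero.mpr (mul_ne_zero hz (by simpa using hw)),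
        Or.inl (by
          push_cast [Units.val_mul, hza, hwb]
          rw [mul_assoc, ← mul_assoc jq, jq_mul_coeComplex w, mul_assoc, jq_mul_jq,
            coeComplex_neg, coeComplex_mul]
          simp [mul_neg, mul_assoc])⟩
  inv_mem' := by
    rintro a ⟨z, hz, hza | hza⟩
    · refine ⟨z⁻¹, inv_ne_zero hz, Or.inl ?_⟩
      rw [Units.val_inv_eq_inv_val, hza, coeComplex_inv]
    · refine ⟨-(((starRingEnd ℂ) z)⁻¹),
        neg_ne_zero.mpr (inv_ne_zero (by simpa using hz)), Or.inr ?_⟩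
      rw [Units.val_inv_eq_inv_val, hza]
      refine inv_eq_of_mul_eq_one_right ?_
      rw [mul_assoc, ← mul_assoc jq, jq_mul_coeComplex, mul_assoc, jq_mul_jq]
      have : (starRingEnd ℂ) (-(((starRingEnd ℂ) z)⁻¹)) = -(z⁻¹) := by simp
      rw [this, coeComplex_neg, coeComplex_inv]
      simp [mul_neg, neg_mul]
      rw [mul_inv_cancel₀ (coeComplex_ne_zero hz)]

/-- The element `z ∈ ℂˣ ⊂ W_ℝ`. -/
def cqW (z : ℂ) (hz : z ≠ 0) : WeilR :=
  ⟨Units.mk0 (z : ℍ[ℝ]) (coeComplex_ne_zero hz), ⟨z, hz, Or.inl rfl⟩⟩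

/-- The element `j ∈ W_ℝ`. -/
def jW : WeilR :=
  ⟨Units.mk0 jq jq_ne_zero, ⟨1, one_ne_zero, Or.inr (by simp)⟩⟩

/-- The element `z·j ∈ W_ℝ` for `z ∈ ℂˣ`. -/
def zjW (z : ℂ) (hz : z ≠ 0) : WeilR :=
  ⟨Units.mk0 ((z : ℍ[ℝ]) * jq) (mul_ne_zero (coeComplex_ne_zero hz) jq_ne_zero),
    ⟨z, hz, Or.inr rfl⟩⟩

end

open Matrix

open Polynomial in
theorem Matrix.exists_real_isUnit_add_smul {ι : Type*} [Fintype ι] [DecidableEq ι]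
    {A B : Matrix ι ι ℂ} {z : ℂ} (h : IsUnit (A + z • B)) :
    ∃ t : ℝ, IsUnit (A + t • B) := by
  let q : ℂ[X] := (A.map C + (X : ℂ[X]) • B.map C).det
  have eval_q (r : ℂ) : q.eval r = (A + r • B).det := by
    rw [← coe_evalRingHom, RingHom.map_det]
    congr 1
    ext i j
    simp only [RingHom.mapMatrix_apply, map_apply, add_apply, smul_apply, smul_eq_mul,
      coe_evalRingHom, eval_add, eval_mul, eval_C, eval_X]
  have hq : q ≠ 0 := fun h0 ↦ by
    rw [isUnit_iff_isUnit_det, ← eval_q, h0, eval_zero] at h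
    exact not_isUnit_zero h
  obtain ⟨t, ht⟩ := ((finite_setOfPred_isRoot hq).preimage
    Complex.ofReal_injective.injOn).infinite_compl.nonempty
  refine ⟨t, ?_⟩
  rw [isUnit_iff_isUnit_det, isUnit_iff_ne_zero, ← Complex.coe_smul, ← eval_q]
  exact ht

theorem Submodule.exists_isHermitian_isUnit_mem {ι : Type*} [Fintype ι] [DecidableEq ι]
    {S : Submodule ℂ (Matrix ι ι ℂ)} (hS : ∀ M ∈ S, Mᴴ ∈ S) {P : Matrix ι ι ℂ}
    (hPu : IsUnit P) (hPS : P ∈ S) : ∃ M ∈ S, IsUnit M ∧ M.IsHermitian := by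
  set A := P + Pᴴ
  set B := Complex.I • (P - Pᴴ)
  have hA : A.IsHermitian := by
    simp only [A, IsHermitian, conjTranspose_add, conjTranspose_conjTranspose, add_comm]
  have hB : B.IsHermitian := by
    simp only [B, IsHermitian, conjTranspose_smul, conjTranspose_sub, conjTranspose_conjTranspose,
      Complex.star_def, Complex.conj_I]
    module
  have hAB : IsUnit (A + (-Complex.I) • B) := by
    have : A + (-Complex.I) • B = (2 : ℂ) • P := by
      simp only [A, B, smul_smul]
      rw [neg_mul, Complex.I_mul_I]
      module
    rw [this]
    exact hPu.smul (Units.mk0 (2 : ℂ) two_ne_zero)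
  obtain ⟨t, ht⟩ := exists_real_isUnit_add_smul hAB
  refine ⟨A + t • B, ?_, ht, hA.add (hB.smul (IsSelfAdjoint.all t))⟩
  exact S.add_mem (S.add_mem hPS (hS P hPS))
    (S.smul_of_tower_mem t (S.smul_mem _ (S.sub_mem hPS (hS P hPS))))

section InvariantForms

variable {G ι : Type*} [Group G] [Fintype ι] [DecidableEq ι]

def invariantSesquilinearForms (ρ : G →* GL ι ℂ) : Submodule ℂ (Matrix ι ι ℂ) where
  carrier := {M | ∀ g, (ρ g : Matrix ι ι ℂ)ᴴ * M * ρ g = M}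
  zero_mem' _ := by simp
  add_mem' hM hN g := by simp only [Matrix.mul_add, Matrix.add_mul, hM g, hN g]
  smul_mem' c M hM g := by simp only [Matrix.mul_smul, Matrix.smul_mul, hM g]

theorem conjTranspose_mem_invariantSesquilinearForms {ρ : G →* GL ι ℂ} {M : Matrix ι ι ℂ}
    (hM : M ∈ invariantSesquilinearForms ρ) : Mᴴ ∈ invariantSesquilinearForms ρ := fun g ↦ by
  simpa only [conjTranspose_mul, conjTranspose_conjTranspose, Matrix.mul_assoc]
    using congrArg conjTranspose (hM g)

theorem coe_mem_invariantSesquilinearForms_iff {ρ : G →* GL ι ℂ} {P : GL ι ℂ} :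
    (P : Matrix ι ι ℂ) ∈ invariantSesquilinearForms ρ ↔
      ∀ g, (P : Matrix ι ι ℂ) * ρ g * (P⁻¹ : GL ι ℂ) = ((ρ g : Matrix ι ι ℂ)ᴴ)⁻¹ := by
  refine forall_congr' fun g ↦ ?_
  rw [← star_eq_conjTranspose, ← Units.coe_star, ← coe_units_inv]
  simp only [← Units.val_mul, Units.val_inj]
  rw [mul_inv_eq_iff_eq_mul, eq_inv_mul_iff_mul_eq, mul_assoc]

end InvariantForms

theorem weil_rep_hermitian_iff_equiv_hermitian_dual_general (n : ℕ)
    (φ : WeilR →* GL (Fin n) ℂ) :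
    (∃ M : Matrix (Fin n) (Fin n) ℂ, IsUnit M ∧ Mᴴ = M ∧
      ∀ w : WeilR, (φ w : Matrix (Fin n) (Fin n) ℂ)ᴴ * M * (φ w : Matrix (Fin n) (Fin n) ℂ) = M)
    ↔
    (∃ P : GL (Fin n) ℂ, ∀ w : WeilR,
      (P : Matrix (Fin n) (Fin n) ℂ) * (φ w : Matrix (Fin n) (Fin n) ℂ) *
          ((P⁻¹ : GL (Fin n) ℂ) : Matrix (Fin n) (Fin n) ℂ) =
        ((φ w : Matrix (Fin n) (Fin n) ℂ)ᴴ)⁻¹) := by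
  constructor
  · rintro ⟨M, hM, -, hφM⟩
    exact ⟨hM.unit, coe_mem_invariantSesquilinearForms_iff.1 hφM⟩
  · rintro ⟨P, hP⟩
    obtain ⟨M, hφM, hM, hMH⟩ := (invariantSesquilinearForms φ).exists_isHermitian_isUnit_mem
      (fun _ ↦ conjTranspose_mem_invariantSesquilinearForms) P.isUnit
      (coe_mem_invariantSesquilinearForms_iff.2 hP)
    exact ⟨M, hM, hMH, hφM⟩

/-- A group homomorphism `φ : W_ℝ → GL(n,ℂ)` admits a nondegenerate
invariant Hermitian form if and only if `φ` is equivalent to its Hermitian dual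
`φ^h = w ↦ (φ(w)ᴴ)⁻¹`. -/
theorem weil_rep_hermitian_iff_equiv_hermitian_dual (n : ℕ) (hn : 1 ≤ n)
    (φ : WeilR →* GL (Fin n) ℂ) :
    (∃ M : Matrix (Fin n) (Fin n) ℂ, IsUnit M ∧ Mᴴ = M ∧
      ∀ w : WeilR, (φ w : Matrix (Fin n) (Fin n) ℂ)ᴴ * M * (φ w : Matrix (Fin n) (Fin n) ℂ) = M)
    ↔
    (∃ P : GL (Fin n) ℂ, ∀ w : WeilR,
      (P : Matrix (Fin n) (Fin n) ℂ) * (φ w : Matrix (Fin n) (Fin n) ℂ) *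
          ((P⁻¹ : GL (Fin n) ℂ) : Matrix (Fin n) (Fin n) ℂ) =
        ((φ w : Matrix (Fin n) (Fin n) ℂ)ᴴ)⁻¹) :=
  weil_rep_hermitian_iff_equiv_hermitian_dual_general n φ
end
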